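/- For a finitely generated module M, the following are equivalent: (1) M is δ-supplemented; (2) every maximal submodule of M has a δ-supplement in M; (3) M = H₁ + H₂ + ⋯ + Hₙ where each Hᵢ is either simple or δ-local. -/

import Mathlib

open Submodule

section Defs

universe u v

variable (R : Type u) [Ring R]

/-- A submodule `L` is essential in `M` if it intersects every nonzero submodule nontrivially. -/
def IsEssentialSub {M : Type v} [AddCommGroup M] [Module R M] (L : Submodule R M) : Prop :=
  ∀ K : Submodule R M, K ≠ ⊥ → L ⊓ K ≠ ⊥

/-- A module is singular if it is isomorphic to `N ⧸ L` for some module `N` and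
essential submodule `L ≤ N`. -/
def IsSingular (M : Type v) [AddCommGroup M] [Module R M] : Prop :=
  ∃ (N : Type v) (_ : AddCommGroup N) (_ : Module R N) (L : Submodule R N),
    IsEssentialSub R L ∧ Nonempty ((N ⧸ L) ≃ₗ[R] M)

variable {M : Type v} [AddCommGroup M] [Module R M]

/-- `N` is small in `M`: `N + Z ≠ M` for every proper submodule `Z`. -/
def SmallSub (N : Submodule R M) : Prop :=
  ∀ Z : Submodule R M, Z ≠ ⊤ → N ⊔ Z ≠ ⊤

/-- `N` is δ-small in `M`: `N + Z ≠ M` for every proper submodule `Z` with `M ⧸ Z` singular. -/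
def DeltaSmall (N : Submodule R M) : Prop :=
  ∀ Z : Submodule R M, Z ≠ ⊤ → IsSingular R (M ⧸ Z) → N ⊔ Z ≠ ⊤

/-- `δ(M)`: the sum of all δ-small submodules of `M`. -/
def deltaRad : Submodule R M := sSup {N : Submodule R M | DeltaSmall R N}

/-- The radical: intersection of all maximal submodules. -/
def radM : Submodule R M := sInf {K : Submodule R M | IsCoatom K}

/-- The socle: sum of all simple submodules. -/
def socM : Submodule R M := sSup {S : Submodule R M | IsAtom S}

/-- `N` is a δ-supplement of `K` in `M`: `N + K = M` and `N ∩ K` is δ-small in `N`. -/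
def IsDeltaSupplement (N K : Submodule R M) : Prop :=
  N ⊔ K = ⊤ ∧ DeltaSmall R ((N ⊓ K).comap N.subtype)

/-- `N` is a δ-supplement submodule of `M`. -/
def IsDeltaSupplementSub (N : Submodule R M) : Prop :=
  ∃ K : Submodule R M, IsDeltaSupplement R N K

/-- `N` is a supplement of `K` in `M`: `N + K = M` and `N ∩ K` is small in `N`. -/
def IsSupplement (N K : Submodule R M) : Prop :=
  N ⊔ K = ⊤ ∧ SmallSub R ((N ⊓ K).comap N.subtype)

/-- `M` is δ-supplemented: every submodule has a δ-supplement. -/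
def DeltaSupplemented (M : Type v) [AddCommGroup M] [Module R M] : Prop :=
  ∀ L : Submodule R M, ∃ N : Submodule R M, IsDeltaSupplement R N L

/-- `M` is supplemented: every submodule has a supplement. -/
def Supplemented (M : Type v) [AddCommGroup M] [Module R M] : Prop :=
  ∀ L : Submodule R M, ∃ N : Submodule R M, IsSupplement R N L

/-- `N` is δ-coclosed in `M`: if `X ≤ N`, `N/X` is singular and `N/X ≪_δ M/X`, then `X = N`. -/
def DeltaCoclosed (N : Submodule R M) : Prop :=
  ∀ X : Submodule R M, X ≤ N →
    IsSingular R ↥(N.map X.mkQ) → DeltaSmall R (N.map X.mkQ) → X = N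

/-- `N` is coclosed in `M`: if `X ≤ N` and `N/X ≪ M/X`, then `X = N`. -/
def Coclosed (N : Submodule R M) : Prop :=
  ∀ X : Submodule R M, X ≤ N → SmallSub R (N.map X.mkQ) → X = N

/-- A module is local if it has a largest proper submodule. -/
def LocalModule (M : Type v) [AddCommGroup M] [Module R M] : Prop :=
  ∃ L : Submodule R M, L ≠ ⊤ ∧ ∀ K : Submodule R M, K ≠ ⊤ → K ≤ L

/-- `M` is δ-local if `δ(M)` is δ-small in `M` and `δ(M)` is a maximal submodule. -/
def DeltaLocal (M : Type v) [AddCommGroup M] [Module R M] : Prop :=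
  DeltaSmall R (deltaRad R : Submodule R M) ∧ IsCoatom (deltaRad R : Submodule R M)

end Defs

/-!
(2 ⇒ 3). If `Z + A = M` with `A` δ-small, then `Z` is a direct summand: for `Y` maximal with
`Z ∩ Y = 0`, the sum `Z + Y` is essential, so `M / (Z + Y)` is singular and `A + Z + Y = M` forces
`Z + Y = M`. Now let `N` be a δ-supplement of a maximal submodule `K`. Then `K ∩ N` is a δ-small
maximal submodule of `N`; either it is `δ(N)`, and `N` is δ-local, or some δ-small submodule of
`N` is not contained in it, and then `K ∩ N` has a complement in `N`, which is simple. Hence no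
maximal submodule contains all simple and δ-local submodules, and as `M` is finitely generated,
finitely many of them sum to `M`.

(3 ⇒ 1). Simple and δ-local modules are δ-supplemented, and a δ-supplement of `N + L` yields
one of `L` whenever `N` is δ-supplemented: if `X` is a δ-supplement of `N + L` in `M` and `Y` one
of `(X + L) ∩ N` in `N`, then `X + Y` is a δ-supplement of `L`.
-/

open Submodule

universe u v

section Lattice

variable {α : Type*} [CompleteLattice α]

theorem exists_maximal_disjoint [IsCompactlyGenerated α] (a : α) :
    ∃ b, Maximal (Disjoint a) b :=
  zorn_le₀ {b | Disjoint a b} fun c hc hchain =>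
    ⟨sSup c, (hchain.directedOn.disjoint_sSup_right).mpr hc, fun _ => le_sSup⟩

theorem sSup_eq_top_of_forall_isCoatom [IsCoatomic α] {S : Set α}
    (h : ∀ K, IsCoatom K → ∃ H ∈ S, ¬H ≤ K) : sSup S = ⊤ := by
  by_contra hne
  obtain ⟨K, hK, hSK⟩ := (eq_top_or_exists_le_coatom (sSup S)).resolve_left hne
  obtain ⟨H, hH, hHK⟩ := h K hK
  exact hHK ((le_sSup hH).trans hSK)

theorem exists_fin_iSup_eq_top_of_sSup_eq_top (htop : IsCompactElement (⊤ : α)) {S : Set α}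
    (hS : sSup S = ⊤) :
    ∃ (n : ℕ) (H : Fin n → α), ⨆ i, H i = ⊤ ∧ ∀ i, H i ∈ S := by
  obtain ⟨t, htS, ht⟩ :=
    (CompleteLattice.isCompactElement_iff_exists_le_sSup_of_le_sSup (α := α) ⊤).mp htop S hS.ge
  refine ⟨t.card, fun i => t.equivFin.symm i, top_unique (ht.trans ?_),
    fun i => htS (Subtype.prop _)⟩
  exact Finset.sup_le fun b hb => le_iSup_of_le (t.equivFin ⟨b, hb⟩) (by simp)

theorem inf_sup_le_inf_sup_inf_sup [IsModularLattice α] {x y n l : α} (hy : y ≤ n) :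
    (x ⊔ y) ⊓ l ≤ x ⊓ (n ⊔ l) ⊔ y ⊓ (x ⊔ l) :=
  calc (x ⊔ y) ⊓ l ≤ (x ⊔ y) ⊓ (x ⊔ l) ⊓ (n ⊔ l) :=
        le_inf (inf_le_inf_left _ le_sup_right) (inf_le_right.trans le_sup_right)
    _ = (x ⊔ y ⊓ (x ⊔ l)) ⊓ (n ⊔ l) := by rw [sup_inf_assoc_of_le y le_sup_left]
    _ = x ⊓ (n ⊔ l) ⊔ y ⊓ (x ⊔ l) := by
        rw [sup_comm x, sup_comm (x ⊓ _), sup_inf_assoc_of_le x (inf_le_left.trans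
          (hy.trans le_sup_left))]

end Lattice

variable {R : Type u} [Ring R]
variable {M M₂ : Type v} [AddCommGroup M] [Module R M] [AddCommGroup M₂] [Module R M₂]

theorem IsEssentialSub.mono {L L' : Submodule R M} (hL : IsEssentialSub R L) (h : L ≤ L') :
    IsEssentialSub R L' :=
  fun K hK hL'K => hL K hK (eq_bot_mono (inf_le_inf_right K h) hL'K)

theorem IsEssentialSub.isSingular_quotient {L : Submodule R M} (hL : IsEssentialSub R L) :
    IsSingular R (M ⧸ L) :=
  ⟨M, _, _, L, hL, ⟨LinearEquiv.refl R _⟩⟩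

theorem IsSingular.of_surjective (hM : IsSingular R M) (f : M →ₗ[R] M₂)
    (hf : Function.Surjective f) : IsSingular R M₂ := by
  obtain ⟨N, _, _, L, hL, ⟨e⟩⟩ := hM
  let g : N →ₗ[R] M₂ := f ∘ₗ (e : (N ⧸ L) →ₗ[R] M) ∘ₗ L.mkQ
  have hLg : L ≤ LinearMap.ker g := fun x hx => by
    simp [g, (Submodule.Quotient.mk_eq_zero L).mpr hx]
  exact ⟨N, _, _, LinearMap.ker g, hL.mono hLg,
    ⟨g.quotKerEquivOfSurjective (hf.comp (e.surjective.comp L.mkQ_surjective))⟩⟩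

theorem IsSingular.of_linearEquiv (hM : IsSingular R M) (e : M ≃ₗ[R] M₂) :
    IsSingular R M₂ :=
  hM.of_surjective e e.surjective

theorem IsSingular.quotient_of_le {Z W : Submodule R M} (h : IsSingular R (M ⧸ Z))
    (hZW : Z ≤ W) : IsSingular R (M ⧸ W) :=
  h.of_surjective (factor hZW) (factor_surjective hZW)

noncomputable def quotientComapSubtypeEquivOfSupEqTop {N Z : Submodule R M} (h : N ⊔ Z = ⊤) :
    (N ⧸ Z.comap N.subtype) ≃ₗ[R] M ⧸ Z :=
  let g : N →ₗ[R] M ⧸ Z := Z.mkQ ∘ₗ N.subtype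
  have hg : Function.Surjective g := by
    rintro ⟨m⟩
    obtain ⟨n, hn, z, hz, rfl⟩ := mem_sup.mp (h ▸ mem_top : m ∈ N ⊔ Z)
    exact ⟨⟨n, hn⟩, (Submodule.Quotient.eq Z).mpr (by simpa using Z.neg_mem hz)⟩
  (quotEquivOfEq _ _ (by rw [LinearMap.ker_comp, ker_mkQ])).trans
    (g.quotKerEquivOfSurjective hg)

theorem deltaSmall_bot : DeltaSmall R (⊥ : Submodule R M) :=
  fun _ hZ _ h => hZ (by rwa [bot_sup_eq] at h)

theorem DeltaSmall.mono {A B : Submodule R M} (hB : DeltaSmall R B) (h : A ≤ B) :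
    DeltaSmall R A :=
  fun Z hZ hs hA => hB Z hZ hs (top_unique (hA ▸ sup_le_sup_right h Z))

theorem DeltaSmall.sup {A B : Submodule R M} (hA : DeltaSmall R A) (hB : DeltaSmall R B) :
    DeltaSmall R (A ⊔ B) :=
  fun Z hZ hs h =>
    hA (B ⊔ Z) (hB Z hZ hs) (hs.quotient_of_le le_sup_right) (by rwa [← sup_assoc])

theorem DeltaSmall.map_linearEquiv {A : Submodule R M} (hA : DeltaSmall R A)
    (e : M ≃ₗ[R] M₂) :
    DeltaSmall R (A.map (e : M →ₗ[R] M₂)) := by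
  intro Z hZ hs h
  have hZ' : (Z.comap (e : M →ₗ[R] M₂)).map (e : M →ₗ[R] M₂) = Z :=
    map_comap_eq_of_surjective e.surjective Z
  refine hA (Z.comap (e : M →ₗ[R] M₂)) (fun htop => hZ ?_)
    (hs.of_linearEquiv (Quotient.equiv _ Z e hZ').symm) ?_
  · rw [← hZ', htop, Submodule.map_top, LinearEquiv.range]
  · apply map_injective_of_injective e.injective
    rw [Submodule.map_sup, hZ', h, Submodule.map_top, LinearEquiv.range]

theorem DeltaSmall.map_subtype {N : Submodule R M} {A : Submodule R N} (hA : DeltaSmall R A) :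
    DeltaSmall R (A.map N.subtype) := by
  intro Z hZ hs h
  have hNZ : N ⊔ Z = ⊤ := top_unique (h ▸ sup_le_sup_right (map_subtype_le N A) Z)
  refine hA (Z.comap N.subtype) (fun htop => hZ ?_)
    (hs.of_linearEquiv (quotientComapSubtypeEquivOfSupEqTop hNZ).symm) ?_
  · rwa [sup_eq_right.mpr (comap_subtype_eq_top.mp htop)] at hNZ
  · apply map_injective_of_injective N.injective_subtype
    rw [Submodule.map_sup, map_comap_subtype, Submodule.map_top, range_subtype, inf_comm,
      ← sup_inf_assoc_of_le _ (map_subtype_le N A), h, top_inf_eq]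

theorem DeltaSmall.map_of_injective {A : Submodule R M} (hA : DeltaSmall R A) (f : M →ₗ[R] M₂)
    (hf : Function.Injective f) : DeltaSmall R (A.map f) := by
  convert (hA.map_linearEquiv (LinearEquiv.ofInjective f hf)).map_subtype using 1
  rw [← map_comp]
  rfl

theorem DeltaSmall.comap_subtype_map {A X : Submodule R M} {W : Submodule R M₂}
    (h : DeltaSmall R (A.comap X.subtype)) (hAX : A ≤ X) (f : M →ₗ[R] M₂)
    (hf : Function.Injective f) (hXW : X.map f ≤ W) :
    DeltaSmall R ((A.map f).comap W.subtype) := by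
  let g : X →ₗ[R] W := (f ∘ₗ X.subtype).codRestrict W fun x => hXW (mem_map_of_mem x.2)
  have hg : Function.Injective g := fun x y hxy =>
    Subtype.ext (hf (congrArg Subtype.val hxy))
  convert h.map_of_injective g hg using 1
  ext ⟨w, hw⟩
  constructor
  · rintro ⟨a, ha, rfl⟩
    exact ⟨⟨a, hAX ha⟩, ha, rfl⟩
  · rintro ⟨x, hx, hxw⟩
    exact ⟨x, hx, congrArg Subtype.val hxw⟩

theorem DeltaSmall.comap_subtype_of_le {A X W : Submodule R M}
    (h : DeltaSmall R (A.comap X.subtype)) (hAX : A ≤ X) (hXW : X ≤ W) :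
    DeltaSmall R (A.comap W.subtype) := by
  simpa using h.comap_subtype_map hAX LinearMap.id Function.injective_id (by simpa using hXW)

theorem isEssentialSub_sup_of_maximal_disjoint {Z Y : Submodule R M}
    (hY : Maximal (Disjoint Z) Y) : IsEssentialSub R (Z ⊔ Y) := by
  intro K hK hZYK
  have hYK : Y ⊔ K ≤ Y :=
    hY.2 (hY.1.disjoint_sup_right_of_disjoint_sup_left (disjoint_iff.mpr hZYK)) le_sup_left
  exact hK (eq_bot_iff.mpr (hZYK ▸ le_inf ((le_sup_right.trans hYK).trans le_sup_right) le_rfl))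

theorem DeltaSmall.exists_isCompl {A Z : Submodule R M} (hA : DeltaSmall R A) (h : A ⊔ Z = ⊤) :
    ∃ Y, IsCompl Z Y := by
  obtain ⟨Y, hY⟩ := exists_maximal_disjoint Z
  refine ⟨Y, hY.1, codisjoint_iff.mpr ?_⟩
  by_contra hne
  exact hA (Z ⊔ Y) hne (isEssentialSub_sup_of_maximal_disjoint hY).isSingular_quotient
    (top_unique (h ▸ sup_le_sup_left le_sup_left A))

theorem isDeltaSupplement_top {L : Submodule R M} (hL : DeltaSmall R L) :
    IsDeltaSupplement R ⊤ L := by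
  refine ⟨top_sup_eq L, ?_⟩
  rw [top_inf_eq]
  convert hL.map_linearEquiv (topEquiv (R := R) (M := M)).symm using 1
  rw [map_equiv_eq_comap_symm]
  rfl

theorem IsCompl.isDeltaSupplement {N L : Submodule R M} (h : IsCompl N L) :
    IsDeltaSupplement R N L :=
  ⟨h.sup_eq_top, by rw [h.inf_eq_bot, comap_bot, ker_subtype]; exact deltaSmall_bot⟩

theorem deltaSupplemented_of_isSemisimpleModule [IsSemisimpleModule R M] :
    DeltaSupplemented R M := fun L =>
  let ⟨N, hN⟩ := exists_isCompl L
  ⟨N, hN.symm.isDeltaSupplement⟩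

theorem DeltaLocal.deltaSupplemented (h : DeltaLocal R M) : DeltaSupplemented R M := by
  intro L
  by_cases hL : L ≤ deltaRad R
  · exact ⟨⊤, isDeltaSupplement_top (h.1.mono hL)⟩
  · obtain ⟨Y, hY⟩ := h.1.exists_isCompl (h.2.2 _ (left_lt_sup.mpr hL))
    exact ⟨Y, hY.symm.isDeltaSupplement⟩

theorem DeltaSupplemented.exists_deltaSupplement_of_le {N : Submodule R M}
    (h : DeltaSupplemented R N) {C : Submodule R M} (hC : C ≤ N) :
    ∃ Y ≤ N, Y ⊔ C = N ∧ DeltaSmall R ((Y ⊓ C).comap Y.subtype) := by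
  obtain ⟨Y, hsup, hsmall⟩ := h (C.comap N.subtype)
  refine ⟨Y.map N.subtype, map_subtype_le N Y, ?_, ?_⟩
  · simpa [Submodule.map_sup, map_comap_subtype, inf_eq_right.mpr hC] using
      congrArg (map N.subtype) hsup
  · simpa [map_inf _ N.injective_subtype, map_comap_subtype, inf_eq_right.mpr hC] using
      hsmall.comap_subtype_map inf_le_left N.subtype N.injective_subtype le_rfl

theorem comap_subtype_le_sup {A B C W : Submodule R M} (hA : A ≤ W) (hB : B ≤ W)
    (h : C ≤ A ⊔ B) : C.comap W.subtype ≤ A.comap W.subtype ⊔ B.comap W.subtype := by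
  rw [← comap_sup_map_of_injective W.injective_subtype, map_comap_subtype, map_comap_subtype,
    inf_eq_right.mpr hA, inf_eq_right.mpr hB]
  exact comap_mono h

theorem DeltaSupplemented.exists_isDeltaSupplement {N L X : Submodule R M}
    (hN : DeltaSupplemented R N) (hX : IsDeltaSupplement R X (N ⊔ L)) :
    ∃ W, IsDeltaSupplement R W L := by
  obtain ⟨Y, hYN, hYsup, hYsmall⟩ :=
    hN.exists_deltaSupplement_of_le (inf_le_right : (X ⊔ L) ⊓ N ≤ N)
  rw [inf_comm _ N, ← inf_assoc, inf_eq_left.mpr hYN] at hYsmall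
  have hN_le : N ≤ X ⊔ Y ⊔ L := hYsup ▸ sup_le (le_sup_right.trans le_sup_left)
    (inf_le_left.trans (sup_le (le_sup_left.trans le_sup_left) le_sup_right))
  have hsup : X ⊔ Y ⊔ L = ⊤ :=
    top_unique (hX.1 ▸ sup_le (le_sup_left.trans le_sup_left) (sup_le hN_le le_sup_right))
  refine ⟨X ⊔ Y, hsup, ((hX.2.comap_subtype_of_le inf_le_left le_sup_left).sup
    (hYsmall.comap_subtype_of_le inf_le_left le_sup_right)).mono ?_⟩
  exact comap_subtype_le_sup (inf_le_left.trans le_sup_left) (inf_le_left.trans le_sup_right)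
    (inf_sup_le_inf_sup_inf_sup hYN)

theorem exists_isDeltaSupplement_of_iSup_sup {ι : Type*} {H : ι → Submodule R M}
    (hH : ∀ i, DeltaSupplemented R (H i)) (s : Finset ι) (L : Submodule R M)
    (hL : ∃ X, IsDeltaSupplement R X ((⨆ i ∈ s, H i) ⊔ L)) :
    ∃ X, IsDeltaSupplement R X L := by
  classical
  induction s using Finset.induction_on generalizing L with
  | empty => simpa using hL
  | insert a s _ ih =>
    rw [Finset.iSup_insert, sup_comm (H a), sup_assoc] at hL
    obtain ⟨X, hX⟩ := ih _ hL
    exact (hH a).exists_isDeltaSupplement hX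

theorem deltaSupplemented_of_iSup_eq_top {ι : Type*} [Finite ι] {H : ι → Submodule R M}
    (hH : ∀ i, DeltaSupplemented R (H i)) (hsup : ⨆ i, H i = ⊤) : DeltaSupplemented R M := by
  cases nonempty_fintype ι
  refine fun L => exists_isDeltaSupplement_of_iSup_sup hH Finset.univ L ⟨⊥, ?_⟩
  simpa [hsup] using isCompl_bot_top.isDeltaSupplement

theorem DeltaSmall.deltaLocal_or_exists_isSimpleModule {A : Submodule R M} (hA : DeltaSmall R A)
    (hco : IsCoatom A) :
    DeltaLocal R M ∨ ∃ Y : Submodule R M, IsSimpleModule R Y ∧ A ⊔ Y = ⊤ := by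
  by_cases hδ : (deltaRad R : Submodule R M) = ⊤
  · obtain ⟨S, hS, hSA⟩ : ∃ S, DeltaSmall R S ∧ ¬S ≤ A := by
      by_contra! hall
      exact hco.1 (top_unique (hδ ▸ sSup_le hall))
    obtain ⟨Y, hY⟩ := hS.exists_isCompl (sup_comm A S ▸ hco.2 _ (left_lt_sup.mpr hSA))
    have : IsSimpleModule R (M ⧸ A) := isSimpleModule_iff_isCoatom.mpr hco
    exact Or.inr ⟨Y, IsSimpleModule.congr (quotientEquivOfIsCompl A Y hY).symm, hY.sup_eq_top⟩
  · have hδA : (deltaRad R : Submodule R M) = A := (hco.le_iff.mp (le_sSup hA)).resolve_left hδ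
    exact Or.inl ⟨hδA ▸ hA, hδA ▸ hco⟩

theorem IsDeltaSupplement.exists_simple_or_deltaLocal_sup_eq_top {N K : Submodule R M}
    (hN : IsDeltaSupplement R N K) (hK : IsCoatom K) :
    ∃ H : Submodule R M, (IsSimpleModule R H ∨ DeltaLocal R H) ∧ H ⊔ K = ⊤ := by
  obtain ⟨hNK, hsmall⟩ := hN
  rw [comap_inf, comap_subtype_self, top_inf_eq] at hsmall
  have hco : IsCoatom (K.comap N.subtype) := by
    have : IsSimpleModule R (M ⧸ K) := isSimpleModule_iff_isCoatom.mpr hK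
    exact isSimpleModule_iff_isCoatom.mp
      (IsSimpleModule.congr (quotientComapSubtypeEquivOfSupEqTop hNK))
  rcases hsmall.deltaLocal_or_exists_isSimpleModule hco with hloc | ⟨Y, hY, hsup⟩
  · exact ⟨N, Or.inr hloc, hNK⟩
  · refine ⟨Y.map N.subtype, Or.inl (IsSimpleModule.congr (Y.equivMapOfInjective _
      N.injective_subtype).symm), top_unique (hNK ▸ sup_le ?_ le_sup_right)⟩
    have hNY : N ⊓ K ⊔ Y.map N.subtype = N := by
      simpa [Submodule.map_sup, map_comap_subtype] using congrArg (map N.subtype) hsup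
    exact hNY.ge.trans (sup_le (inf_le_right.trans le_sup_right) le_sup_left)

theorem fg_deltaSupplemented_tfae {R : Type*} [Ring R] (M : Type*) [AddCommGroup M]
    [Module R M] [Module.Finite R M] :
    List.TFAE [
      DeltaSupplemented R M,
      ∀ K : Submodule R M, IsCoatom K → ∃ N : Submodule R M, IsDeltaSupplement R N K,
      ∃ (n : ℕ) (H : Fin n → Submodule R M), (⨆ i, H i) = ⊤ ∧
        ∀ i, IsSimpleModule R (H i) ∨ DeltaLocal R (H i)] := by
  tfae_have 1 → 2 := fun h K _ => h K
  tfae_have 2 → 3 := fun h => by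
    refine exists_fin_iSup_eq_top_of_sSup_eq_top (S := {H | IsSimpleModule R H ∨ DeltaLocal R H})
      ((fg_iff_compact ⊤).mp Module.Finite.fg_top) (sSup_eq_top_of_forall_isCoatom fun K hK => ?_)
    obtain ⟨N, hN⟩ := h K hK
    obtain ⟨H, hH, hHK⟩ := hN.exists_simple_or_deltaLocal_sup_eq_top hK
    exact ⟨H, hH, fun hle => hK.1 (by rwa [sup_eq_right.mpr hle] at hHK)⟩
  tfae_have 3 → 1 := fun ⟨_, _, hsup, hH⟩ =>
    deltaSupplemented_of_iSup_eq_top (fun i => (hH i).elim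
      (fun _ => deltaSupplemented_of_isSemisimpleModule) DeltaLocal.deltaSupplemented) hsup
  tfae_finish
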